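/- Let n ≥ 2 and let B_1, B_2 be n×n complex Hermitian matrices. Then equality 2‖[B_1, B_2]‖² = (‖B_1‖² + ‖B_2‖²)² holds if and only if there exist a unitary matrix P ∈ U(n), an orthogonal matrix R ∈ O(2), a real number λ ≥ 0, and an angle θ ∈ ℝ such that the matrices C_r := Σ_{j=1}^2 R_{j r} P* B_j P satisfy C_1 = diag(H_1, 0) and C_2 = diag(cos θ · H_2 + sin θ · H_3, 0) (block-diagonal n×n matrices with lower-right (n−2)×(n−2) zero block). -/

import Mathlib

open Matrix

/-- Squared Frobenius norm of a complex matrix: `Re tr (A Aᴴ)`. -/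
noncomputable def frobSq {n : ℕ} (A : Matrix (Fin n) (Fin n) ℂ) : ℝ :=
  ((A * Aᴴ).trace).re

/-- Commutator of matrices. -/
noncomputable def mcomm {n : ℕ} (A B : Matrix (Fin n) (Fin n) ℂ) : Matrix (Fin n) (Fin n) ℂ :=
  A * B - B * A

/-- `H₁ = [[λ,0],[0,-λ]]`. -/
noncomputable def H1 (l : ℝ) : Matrix (Fin 2) (Fin 2) ℂ := !![(l : ℂ), 0; 0, -(l : ℂ)]

/-- `H₂ = [[0,λ],[λ,0]]`. -/
noncomputable def H2 (l : ℝ) : Matrix (Fin 2) (Fin 2) ℂ := !![0, (l : ℂ); (l : ℂ), 0]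

/-- `H₃ = [[0,-λi],[λi,0]]`. -/
noncomputable def H3 (l : ℝ) : Matrix (Fin 2) (Fin 2) ℂ :=
  !![0, -(l : ℂ) * Complex.I; (l : ℂ) * Complex.I, 0]

/-- The block-diagonal `n × n` matrix `diag(M, 0)` with lower-right `(n-2) × (n-2)` zero block. -/
def diagEmbed {n : ℕ} (M : Matrix (Fin 2) (Fin 2) ℂ) : Matrix (Fin n) (Fin n) ℂ :=
  fun i j => if h : i.val < 2 ∧ j.val < 2 then M ⟨i.val, h.1⟩ ⟨j.val, h.2⟩ else 0

lemma frobSq_eq_sum {n : ℕ} (A : Matrix (Fin n) (Fin n) ℂ) :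
    frobSq A = ∑ p, ∑ q, Complex.normSq (A p q) := by
  simp only [frobSq, Matrix.trace, Matrix.diag_apply, Matrix.mul_apply,
    Matrix.conjTranspose_apply, Complex.re_sum]
  congr 1; ext p; congr 1; ext q
  rw [show star (A p q) = (starRingEnd ℂ) (A p q) from rfl, Complex.mul_conj]
  simp

lemma sum_fin_lt_two {n : ℕ} (hn : 2 ≤ n) {M : Type*} [AddCommMonoid M] (g : Fin n → M)
    (hg : ∀ i : Fin n, ¬ i.val < 2 → g i = 0) :
    ∑ i, g i = ∑ i : Fin 2, g (Fin.castLE hn i) := by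
  have h2 := Finset.sum_map Finset.univ ⟨Fin.castLE hn, Fin.castLE_injective hn⟩ g
  simp only [Function.Embedding.coeFn_mk] at h2
  rw [← h2]
  symm
  apply Finset.sum_subset (Finset.subset_univ _)
  intro x _ hx
  apply hg
  intro hlt
  exact hx (Finset.mem_map.mpr ⟨⟨x.val, hlt⟩, Finset.mem_univ _, by simp [Fin.castLE]⟩)

lemma diagEmbed_apply_lt {n : ℕ} (M : Matrix (Fin 2) (Fin 2) ℂ) (i j : Fin n)
    (hi : i.val < 2) (hj : j.val < 2) :
    diagEmbed M i j = M ⟨i.val, hi⟩ ⟨j.val, hj⟩ := by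
  simp [diagEmbed, hi, hj]

lemma diagEmbed_mul {n : ℕ} (hn : 2 ≤ n) (M N : Matrix (Fin 2) (Fin 2) ℂ) :
    (diagEmbed M : Matrix (Fin n) (Fin n) ℂ) * diagEmbed N = diagEmbed (M * N) := by
  ext i j
  rw [Matrix.mul_apply]
  by_cases hi : i.val < 2
  · by_cases hj : j.val < 2
    · rw [sum_fin_lt_two hn _ (fun k hk => by simp [diagEmbed, hk])]
      rw [diagEmbed_apply_lt _ _ _ hi hj, Matrix.mul_apply]
      apply Finset.sum_congr rfl
      intro k _
      rw [diagEmbed_apply_lt _ _ _ hi (by exact k.isLt), diagEmbed_apply_lt _ _ _ (by exact k.isLt) hj]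
      congr 1 <;> ext <;> simp [Fin.castLE]
    · simp [diagEmbed, hj]
  · simp [diagEmbed, hi]

lemma diagEmbed_sub {n : ℕ} (M N : Matrix (Fin 2) (Fin 2) ℂ) :
    (diagEmbed (M - N) : Matrix (Fin n) (Fin n) ℂ) = diagEmbed M - diagEmbed N := by
  ext i j
  by_cases h : i.val < 2 ∧ j.val < 2
  · simp only [diagEmbed, Matrix.sub_apply, dif_pos h]
  · simp only [diagEmbed, Matrix.sub_apply, dif_neg h, sub_zero]

lemma diagEmbed_mcomm {n : ℕ} (hn : 2 ≤ n) (M N : Matrix (Fin 2) (Fin 2) ℂ) :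
    mcomm (diagEmbed M : Matrix (Fin n) (Fin n) ℂ) (diagEmbed N) = diagEmbed (mcomm M N) := by
  unfold mcomm
  rw [diagEmbed_mul hn, diagEmbed_mul hn, diagEmbed_sub]

lemma frobSq_diagEmbed {n : ℕ} (hn : 2 ≤ n) (M : Matrix (Fin 2) (Fin 2) ℂ) :
    frobSq (diagEmbed M : Matrix (Fin n) (Fin n) ℂ) = frobSq M := by
  rw [frobSq_eq_sum, frobSq_eq_sum]
  rw [sum_fin_lt_two hn _ (fun i hi => by
    apply Finset.sum_eq_zero; intro q _; simp [diagEmbed, hi])]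
  apply Finset.sum_congr rfl
  intro i _
  rw [sum_fin_lt_two hn _ (fun j hj => by simp [diagEmbed, hj])]
  apply Finset.sum_congr rfl
  intro j _
  rw [diagEmbed_apply_lt _ _ _ (by exact i.isLt) (by exact j.isLt)]
  congr <;> ext <;> simp [Fin.castLE]

lemma frobSq_nonneg {n : ℕ} (A : Matrix (Fin n) (Fin n) ℂ) : 0 ≤ frobSq A := by
  rw [frobSq_eq_sum]
  refine Finset.sum_nonneg fun p _ => Finset.sum_nonneg fun q _ => Complex.normSq_nonneg _

lemma frobSq_eq_zero {n : ℕ} (A : Matrix (Fin n) (Fin n) ℂ) (h : frobSq A = 0) : A = 0 := by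
  rw [frobSq_eq_sum] at h
  ext i j
  have h1 : ∀ p ∈ Finset.univ, (0:ℝ) ≤ ∑ q, Complex.normSq (A p q) := by
    intro p _; exact Finset.sum_nonneg fun q _ => Complex.normSq_nonneg _
  have := (Finset.sum_eq_zero_iff_of_nonneg h1).mp h i (Finset.mem_univ i)
  have h2 : ∀ q ∈ Finset.univ, (0:ℝ) ≤ Complex.normSq (A i q) := by intro q _; exact Complex.normSq_nonneg _
  have := (Finset.sum_eq_zero_iff_of_nonneg h2).mp this j (Finset.mem_univ j)
  simpa using Complex.normSq_eq_zero.mp this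

lemma frobSq_conj {n : ℕ} (P A : Matrix (Fin n) (Fin n) ℂ) (hP : Pᴴ * P = 1) :
    frobSq (Pᴴ * A * P) = frobSq A := by
  have hP' : P * Pᴴ = 1 := mul_eq_one_comm.mp hP
  unfold frobSq
  congr 1
  rw [Matrix.conjTranspose_mul, Matrix.conjTranspose_mul, Matrix.conjTranspose_conjTranspose]
  calc (Pᴴ * A * P * (Pᴴ * (Aᴴ * P))).trace
      = (Pᴴ * (A * Aᴴ) * P).trace := by
        rw [show Pᴴ * A * P * (Pᴴ * (Aᴴ * P)) = Pᴴ * A * (P * Pᴴ) * (Aᴴ * P) by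
          noncomm_ring]
        rw [hP']; noncomm_ring
    _ = ((A * Aᴴ) * (P * Pᴴ)).trace := by
        rw [Matrix.trace_mul_cycle, Matrix.trace_mul_comm]
    _ = (A * Aᴴ).trace := by rw [hP', Matrix.mul_one]

lemma mcomm_conj {n : ℕ} (P A B : Matrix (Fin n) (Fin n) ℂ) (hP : Pᴴ * P = 1) :
    mcomm (Pᴴ * A * P) (Pᴴ * B * P) = Pᴴ * mcomm A B * P := by
  have hP' : P * Pᴴ = 1 := mul_eq_one_comm.mp hP
  unfold mcomm
  have h1 : Pᴴ * A * P * (Pᴴ * B * P) = Pᴴ * (A * B) * P := by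
    rw [show Pᴴ * A * P * (Pᴴ * B * P) = Pᴴ * A * (P * Pᴴ) * B * P by noncomm_ring, hP']
    noncomm_ring
  have h2 : Pᴴ * B * P * (Pᴴ * A * P) = Pᴴ * (B * A) * P := by
    rw [show Pᴴ * B * P * (Pᴴ * A * P) = Pᴴ * B * (P * Pᴴ) * A * P by noncomm_ring, hP']
    noncomm_ring
  rw [h1, h2]
  noncomm_ring
noncomputable def M2 (l θ : ℝ) : Matrix (Fin 2) (Fin 2) ℂ :=
  (Real.cos θ : ℂ) • H2 l + (Real.sin θ : ℂ) • H3 l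

lemma frobSq_H1 (l : ℝ) : frobSq (H1 l) = 2 * l ^ 2 := by
  simp [frobSq_eq_sum, Fin.sum_univ_two, H1, Complex.normSq_ofReal]
  ring

lemma frobSq_M2 (l θ : ℝ) : frobSq (M2 l θ) = 2 * l ^ 2 := by
  have hpy := Real.sin_sq_add_cos_sq θ
  set c := Real.cos θ with hc
  set s := Real.sin θ with hs
  simp [frobSq_eq_sum, Fin.sum_univ_two, M2, H2, H3, Complex.normSq_apply, Complex.add_re,
    Complex.add_im, Complex.mul_re, Complex.mul_im, Complex.cos_ofReal_re, Complex.sin_ofReal_re]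
  nlinarith [hpy]

lemma frobSq_mcomm_H1_M2 (l θ : ℝ) : frobSq (mcomm (H1 l) (M2 l θ)) = 8 * l ^ 4 := by
  have hpy := Real.sin_sq_add_cos_sq θ
  set c := Real.cos θ with hc
  set s := Real.sin θ with hs
  simp [frobSq_eq_sum, Fin.sum_univ_two, mcomm, M2, H1, H2, H3, Matrix.mul_apply,
    Complex.normSq_apply, Complex.add_re, Complex.add_im, Complex.mul_re, Complex.mul_im, Complex.cos_ofReal_re, Complex.sin_ofReal_re]
  nlinarith [hpy]

lemma frobSq_real_smul {n : ℕ} (c : ℝ) (A : Matrix (Fin n) (Fin n) ℂ) :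
    frobSq ((c : ℂ) • A) = c ^ 2 * frobSq A := by
  rw [frobSq_eq_sum, frobSq_eq_sum, Finset.mul_sum]
  apply Finset.sum_congr rfl
  intro p _
  rw [Finset.mul_sum]
  apply Finset.sum_congr rfl
  intro q _
  rw [Matrix.smul_apply, smul_eq_mul, Complex.normSq_mul, Complex.normSq_ofReal]
  ring

lemma mcomm_comb {n : ℕ} (x y x' y' : ℂ) (C D : Matrix (Fin n) (Fin n) ℂ) :
    mcomm (x • C + y • D) (x' • C + y' • D) = (x * y' - y * x') • mcomm C D := by
  unfold mcomm
  simp only [add_mul, mul_add, smul_mul_assoc, mul_smul_comm, smul_smul, sub_smul, smul_sub]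
  module

lemma reverse_aux {n : ℕ} (hn : 2 ≤ n) (B : Fin 2 → Matrix (Fin n) (Fin n) ℂ)
    (P : Matrix (Fin n) (Fin n) ℂ) (R : Matrix (Fin 2) (Fin 2) ℝ) (l θ : ℝ)
    (hP : Pᴴ * P = 1) (hR : Rᵀ * R = 1)
    (h1 : (∑ j : Fin 2, (R j 0 : ℂ) • (Pᴴ * B j * P)) = diagEmbed (H1 l))
    (h2 : (∑ j : Fin 2, (R j 1 : ℂ) • (Pᴴ * B j * P)) =
      diagEmbed ((Real.cos θ : ℂ) • H2 l + (Real.sin θ : ℂ) • H3 l)) :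
    2 * frobSq (mcomm (B 0) (B 1)) = (frobSq (B 0) + frobSq (B 1)) ^ 2 := by
  set C1 : Matrix (Fin n) (Fin n) ℂ := diagEmbed (H1 l) with hC1
  set C2 : Matrix (Fin n) (Fin n) ℂ := diagEmbed (M2 l θ) with hC2
  set A0 := Pᴴ * B 0 * P with hA0def
  set A1 := Pᴴ * B 1 * P with hA1def
  rw [Fin.sum_univ_two] at h1 h2
  have h2' : (R 0 1 : ℂ) • A0 + (R 1 1 : ℂ) • A1 = C2 := h2
  have h1' : (R 0 0 : ℂ) • A0 + (R 1 0 : ℂ) • A1 = C1 := h1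
  -- entries of R*Rᵀ = 1
  have hR' : R * Rᵀ = 1 := mul_eq_one_comm.mp hR
  have e00 : R 0 0 * R 0 0 + R 0 1 * R 0 1 = 1 := by
    have := congrFun (congrFun hR' 0) 0
    simpa [Matrix.mul_apply, Fin.sum_univ_two, Matrix.one_apply] using this
  have e01 : R 0 0 * R 1 0 + R 0 1 * R 1 1 = 0 := by
    have := congrFun (congrFun hR' 0) 1
    simpa [Matrix.mul_apply, Fin.sum_univ_two, Matrix.one_apply] using this
  have e10 : R 1 0 * R 0 0 + R 1 1 * R 0 1 = 0 := by
    have := congrFun (congrFun hR' 1) 0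
    simpa [Matrix.mul_apply, Fin.sum_univ_two, Matrix.one_apply] using this
  have e11 : R 1 0 * R 1 0 + R 1 1 * R 1 1 = 1 := by
    have := congrFun (congrFun hR' 1) 1
    simpa [Matrix.mul_apply, Fin.sum_univ_two, Matrix.one_apply] using this
  -- recover A's from C's
  have hA0 : A0 = (R 0 0 : ℂ) • C1 + (R 0 1 : ℂ) • C2 := by
    rw [← h1', ← h2']
    rw [smul_add, smul_add, smul_smul, smul_smul, smul_smul, smul_smul]
    have c00 : (R 0 0 : ℂ) * (R 0 0 : ℂ) + (R 0 1 : ℂ) * (R 0 1 : ℂ) = 1 := by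
      exact_mod_cast congrArg (Complex.ofReal) e00
    have c01 : (R 0 0 : ℂ) * (R 1 0 : ℂ) + (R 0 1 : ℂ) * (R 1 1 : ℂ) = 0 := by
      exact_mod_cast congrArg (Complex.ofReal) e01
    rw [add_add_add_comm, ← add_smul, ← add_smul, c00, c01, one_smul, zero_smul, add_zero]
  have hA1 : A1 = (R 1 0 : ℂ) • C1 + (R 1 1 : ℂ) • C2 := by
    rw [← h1', ← h2']
    rw [smul_add, smul_add, smul_smul, smul_smul, smul_smul, smul_smul]
    have c10 : (R 1 0 : ℂ) * (R 0 0 : ℂ) + (R 1 1 : ℂ) * (R 0 1 : ℂ) = 0 := by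
      exact_mod_cast congrArg (Complex.ofReal) e10
    have c11 : (R 1 0 : ℂ) * (R 1 0 : ℂ) + (R 1 1 : ℂ) * (R 1 1 : ℂ) = 1 := by
      exact_mod_cast congrArg (Complex.ofReal) e11
    rw [add_add_add_comm, ← add_smul, ← add_smul, c10, c11, one_smul, zero_smul, zero_add]
  -- disjoint supports
  have hdisj : ∀ i j, C1 i j = 0 ∨ C2 i j = 0 := by
    intro i j
    by_cases hij : i.val < 2 ∧ j.val < 2
    · rw [hC1, hC2, diagEmbed_apply_lt _ _ _ hij.1 hij.2, diagEmbed_apply_lt _ _ _ hij.1 hij.2]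
      have hi2 : (⟨i.val, hij.1⟩ : Fin 2) = 0 ∨ (⟨i.val, hij.1⟩ : Fin 2) = 1 := by omega
      have hj2 : (⟨j.val, hij.2⟩ : Fin 2) = 0 ∨ (⟨j.val, hij.2⟩ : Fin 2) = 1 := by omega
      rcases hi2 with hi | hi <;> rcases hj2 with hj | hj <;> rw [hi, hj] <;>
        simp [H1, H2, H3, M2]
    · left; rw [hC1]; simp only [diagEmbed, dif_neg hij]
  have key : ∀ (x y : ℝ) (i j : Fin n),
      Complex.normSq ((x : ℂ) * C1 i j + (y : ℂ) * C2 i j)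
        = x ^ 2 * Complex.normSq (C1 i j) + y ^ 2 * Complex.normSq (C2 i j) := by
    intro x y i j
    rcases hdisj i j with h | h
    · rw [h, mul_zero, zero_add, Complex.normSq_mul, Complex.normSq_ofReal,
        Complex.normSq_zero]
      ring
    · rw [h, mul_zero, add_zero, Complex.normSq_mul, Complex.normSq_ofReal,
        Complex.normSq_zero]
      ring
  have frobComb : ∀ x y : ℝ, frobSq ((x : ℂ) • C1 + (y : ℂ) • C2)
      = x ^ 2 * frobSq C1 + y ^ 2 * frobSq C2 := by
    intro x y
    rw [frobSq_eq_sum, frobSq_eq_sum, frobSq_eq_sum, Finset.mul_sum, Finset.mul_sum,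
      ← Finset.sum_add_distrib]
    apply Finset.sum_congr rfl
    intro p _
    rw [Finset.mul_sum, Finset.mul_sum, ← Finset.sum_add_distrib]
    apply Finset.sum_congr rfl
    intro q _
    simpa using key x y p q
  -- norms
  have fB0 : frobSq (B 0) = (R 0 0) ^ 2 * frobSq C1 + (R 0 1) ^ 2 * frobSq C2 := by
    rw [← frobSq_conj P (B 0) hP, ← hA0def, hA0, frobComb]
  have fB1 : frobSq (B 1) = (R 1 0) ^ 2 * frobSq C1 + (R 1 1) ^ 2 * frobSq C2 := by
    rw [← frobSq_conj P (B 1) hP, ← hA1def, hA1, frobComb]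
  -- commutator
  have hdet2 : (R 0 0 * R 1 1 - R 0 1 * R 1 0) ^ 2 = 1 := by
    have hd : R.det * R.det = 1 := by
      have := congrArg Matrix.det hR
      rwa [Matrix.det_mul, Matrix.det_transpose, Matrix.det_one] at this
    rw [Matrix.det_fin_two] at hd
    nlinarith [hd]
  have fC : frobSq (mcomm (B 0) (B 1)) = frobSq (mcomm C1 C2) := by
    have hcc : mcomm A0 A1 = ((R 0 0 * R 1 1 - R 0 1 * R 1 0 : ℝ) : ℂ) • mcomm C1 C2 := by
      rw [hA0, hA1, mcomm_comb]
      norm_cast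
    have h3 : frobSq (mcomm A0 A1) = frobSq (mcomm (B 0) (B 1)) := by
      rw [hA0def, hA1def, mcomm_conj _ _ _ hP, frobSq_conj _ _ hP]
    rw [← h3, hcc, frobSq_real_smul, hdet2, one_mul]
  -- concrete values
  have v1 : frobSq C1 = 2 * l ^ 2 := by rw [hC1, frobSq_diagEmbed hn, frobSq_H1]
  have v2 : frobSq C2 = 2 * l ^ 2 := by rw [hC2, frobSq_diagEmbed hn, frobSq_M2]
  have v3 : frobSq (mcomm C1 C2) = 8 * l ^ 4 := by
    rw [hC1, hC2, diagEmbed_mcomm hn, frobSq_diagEmbed hn, frobSq_mcomm_H1_M2]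
  rw [fC, v3, fB0, fB1, v1, v2]
  have k0 : R 0 0 ^ 2 + R 0 1 ^ 2 = 1 := by linear_combination e00
  have k1 : R 1 0 ^ 2 + R 1 1 ^ 2 = 1 := by linear_combination e11
  linear_combination (-4*l^4*(R 0 0 ^ 2 + R 0 1 ^ 2 + R 1 0 ^ 2 + R 1 1 ^ 2 + 2)) * k0 +
    (-4*l^4*(R 0 0 ^ 2 + R 0 1 ^ 2 + R 1 0 ^ 2 + R 1 1 ^ 2 + 2)) * k1

lemma fin2_cases (i : Fin 2) : i = 0 ∨ i = 1 := by omega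

lemma aux_pair (x y S : ℝ) (h1 : (x - y) ^ 2 = 2 * S) (h2 : x ^ 2 + y ^ 2 ≤ S) :
    y = -x ∧ x ^ 2 = S / 2 := by
  have h4 : x + y = 0 := by nlinarith [sq_nonneg (x + y)]
  constructor
  · linarith
  · nlinarith

lemma aux_small (l v : ℝ) (hl : 0 < l) (h : v ^ 2 = 4 * l ^ 2)
    (hv : v = l ∨ v = -l ∨ v = 0) : False := by
  rcases hv with rfl | rfl | rfl <;> nlinarith

lemma aux_abs (A l : ℝ) (hA : 0 ≤ A) (hl : 0 < l) (h : A ^ 2 = l ^ 2) : A = l := by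
  nlinarith

noncomputable def MT (l t : ℝ) : Matrix (Fin 2) (Fin 2) ℂ :=
  (Real.cos (-t) : ℂ) • H2 l + (Real.sin (-t) : ℂ) • H3 l

lemma MT00 (l t : ℝ) : MT l t 0 0 = 0 := by simp [MT, H2, H3]
lemma MT11 (l t : ℝ) : MT l t 1 1 = 0 := by simp [MT, H2, H3]
lemma MT01 (l t : ℝ) : MT l t 0 1
    = (l : ℂ) * ((Real.cos t : ℂ) + (Real.sin t : ℂ) * Complex.I) := by
  simp [MT, H2, H3, Real.cos_neg, Real.sin_neg]
  ring
lemma MT10 (l t : ℝ) : MT l t 1 0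
    = (l : ℂ) * ((Real.cos t : ℂ) - (Real.sin t : ℂ) * Complex.I) := by
  simp [MT, H2, H3, Real.cos_neg, Real.sin_neg]
  ring

lemma forward_aux {n : ℕ} (hn : 2 ≤ n) (B : Fin 2 → Matrix (Fin n) (Fin n) ℂ)
    (hB : ∀ r, (B r)ᴴ = B r)
    (heq : 2 * frobSq (mcomm (B 0) (B 1)) = (frobSq (B 0) + frobSq (B 1)) ^ 2) :
    ∃ (P : Matrix (Fin n) (Fin n) ℂ) (R : Matrix (Fin 2) (Fin 2) ℝ) (l θ : ℝ),
      Pᴴ * P = 1 ∧ Rᵀ * R = 1 ∧ 0 ≤ l ∧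
      (∑ j : Fin 2, (R j 0 : ℂ) • (Pᴴ * B j * P)) = diagEmbed (H1 l) ∧
      (∑ j : Fin 2, (R j 1 : ℂ) • (Pᴴ * B j * P)) =
        diagEmbed ((Real.cos θ : ℂ) • H2 l + (Real.sin θ : ℂ) • H3 l) := by
  classical
  have hH0 : (B 0).IsHermitian := hB 0
  set U : Matrix (Fin n) (Fin n) ℂ := (Matrix.IsHermitian.eigenvectorUnitary hH0 : Matrix (Fin n) (Fin n) ℂ) with hUdef
  set a : Fin n → ℝ := hH0.eigenvalues with hadef
  have hUU : Uᴴ * U = 1 := by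
    rw [← Matrix.star_eq_conjTranspose]
    exact Unitary.star_mul_self_of_mem (Matrix.IsHermitian.eigenvectorUnitary hH0).2
  have hUD : Uᴴ * B 0 * U = Matrix.diagonal (fun p => ((a p : ℂ))) := by
    have := hH0.conjStarAlgAut_star_eigenvectorUnitary
    simp only [Unitary.conjStarAlgAut_apply, Unitary.coe_star, star_star] at this
    rw [Matrix.star_eq_conjTranspose] at this
    convert this using 2 <;> rfl
  set b : Matrix (Fin n) (Fin n) ℂ := Uᴴ * B 1 * U with hbdef
  have hbherm : bᴴ = b := by
    rw [hbdef, Matrix.conjTranspose_mul, Matrix.conjTranspose_mul,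
      Matrix.conjTranspose_conjTranspose, hB 1, Matrix.mul_assoc]
  have hbsym : ∀ p q, b q p = (starRingEnd ℂ) (b p q) := by
    intro p q
    have := congrFun (congrFun hbherm q) p
    rw [Matrix.conjTranspose_apply] at this
    exact this.symm
  set S : ℝ := ∑ p, (a p) ^ 2 with hSdef
  set T : ℝ := ∑ p, ∑ q, Complex.normSq (b p q) with hTdef
  have hSnn : 0 ≤ S := Finset.sum_nonneg fun p _ => sq_nonneg _
  have fB0 : frobSq (B 0) = S := by
    rw [← frobSq_conj U (B 0) hUU, hUD, frobSq_eq_sum]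
    apply Finset.sum_congr rfl
    intro p _
    rw [Finset.sum_eq_single p]
    · rw [Matrix.diagonal_apply_eq, Complex.normSq_ofReal]; ring
    · intro q _ hq
      rw [Matrix.diagonal_apply_ne' _ hq, Complex.normSq_zero]
    · intro h; exact absurd (Finset.mem_univ p) h
  have fB1 : frobSq (B 1) = T := by
    rw [← frobSq_conj U (B 1) hUU, ← hbdef, frobSq_eq_sum]
  have fC : frobSq (mcomm (B 0) (B 1))
      = ∑ p, ∑ q, (a p - a q) ^ 2 * Complex.normSq (b p q) := by
    rw [← frobSq_conj U (mcomm (B 0) (B 1)) hUU, ← mcomm_conj _ _ _ hUU, hUD, ← hbdef,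
      frobSq_eq_sum]
    apply Finset.sum_congr rfl; intro p _
    apply Finset.sum_congr rfl; intro q _
    rw [show mcomm (Matrix.diagonal fun p => ((a p : ℂ))) b p q
        = ((a p : ℂ) - (a q : ℂ)) * b p q by
      simp [mcomm, Matrix.sub_apply, Matrix.diagonal_mul, Matrix.mul_diagonal]; ring]
    rw [Complex.normSq_mul, show ((a p : ℂ) - (a q : ℂ)) = ((a p - a q : ℝ) : ℂ) by push_cast; ring,
      Complex.normSq_ofReal]
    ring
  rw [fB0, fB1, fC] at heq
  -- termwise bound
  have haS : ∀ p q : Fin n, p ≠ q → (a p) ^ 2 + (a q) ^ 2 ≤ S := by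
    intro p q hpq
    have h1 : ∑ r ∈ ({p, q} : Finset (Fin n)), a r ^ 2 = a p ^ 2 + a q ^ 2 :=
      Finset.sum_pair hpq
    rw [hSdef, ← h1]
    exact Finset.sum_le_sum_of_subset_of_nonneg (Finset.subset_univ _)
      (fun r _ _ => sq_nonneg _)
  have hterm : ∀ p q : Fin n, (a p - a q) ^ 2 * Complex.normSq (b p q)
      ≤ 2 * S * Complex.normSq (b p q) := by
    intro p q
    apply mul_le_mul_of_nonneg_right _ (Complex.normSq_nonneg _)
    by_cases hpq : p = q
    · subst hpq; simpa using mul_nonneg (by norm_num : (0:ℝ) ≤ 2) hSnn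
    · nlinarith [haS p q hpq, sq_nonneg (a p + a q)]
  have houter : ∀ p : Fin n, ∑ q, (a p - a q) ^ 2 * Complex.normSq (b p q)
      ≤ ∑ q, 2 * S * Complex.normSq (b p q) :=
    fun p => Finset.sum_le_sum fun q _ => hterm p q
  have hsum_le : (∑ p, ∑ q, (a p - a q) ^ 2 * Complex.normSq (b p q)) ≤ 2 * S * T := by
    rw [hTdef, Finset.mul_sum Finset.univ (fun p => ∑ q, Complex.normSq (b p q)) (2*S)]
    exact Finset.sum_le_sum fun p _ => le_trans (houter p)
      (le_of_eq (Finset.mul_sum Finset.univ (fun q => Complex.normSq (b p q)) (2*S)).symm)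
  have hTnn : 0 ≤ T :=
    Finset.sum_nonneg fun p _ => Finset.sum_nonneg fun q _ => Complex.normSq_nonneg _
  have hST : 4 * S * T ≤ (S + T) ^ 2 := by nlinarith [sq_nonneg (S - T)]
  have hsum_eq : (∑ p, ∑ q, (a p - a q) ^ 2 * Complex.normSq (b p q)) = 2 * S * T := by
    nlinarith [hsum_le, hST, heq]
  have hSeqT : S = T := by nlinarith [hsum_le, hST, heq]
  -- termwise equality
  have htermeq : ∀ p q : Fin n, (a p - a q) ^ 2 * Complex.normSq (b p q)
      = 2 * S * Complex.normSq (b p q) := by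
    by_contra hc
    push_neg at hc
    obtain ⟨p, q, hpq⟩ := hc
    have houter_strict : ∑ q, (a p - a q) ^ 2 * Complex.normSq (b p q)
        < ∑ q, 2 * S * Complex.normSq (b p q) :=
      Finset.sum_lt_sum (fun q _ => hterm p q) ⟨q, Finset.mem_univ q, lt_of_le_of_ne (hterm p q) hpq⟩
    have : (∑ p, ∑ q, (a p - a q) ^ 2 * Complex.normSq (b p q))
        < ∑ p, ∑ q, 2 * S * Complex.normSq (b p q) :=
      Finset.sum_lt_sum (fun p _ => houter p) ⟨p, Finset.mem_univ p, houter_strict⟩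
    rw [hsum_eq] at this
    have h2 : (∑ p, ∑ q, 2 * S * Complex.normSq (b p q)) = 2 * S * T := by
      rw [hTdef, Finset.mul_sum Finset.univ (fun p => ∑ q, Complex.normSq (b p q)) (2*S)]
      exact Finset.sum_congr rfl fun p _ =>
        (Finset.mul_sum Finset.univ (fun q => Complex.normSq (b p q)) (2*S)).symm
    rw [h2] at this
    exact lt_irrefl _ this
  have hkey : ∀ p q : Fin n, b p q ≠ 0 → (a p - a q) ^ 2 = 2 * S := by
    intro p q hbne
    have hnsq : Complex.normSq (b p q) ≠ 0 := fun h => hbne (Complex.normSq_eq_zero.mp h)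
    exact mul_right_cancel₀ hnsq (htermeq p q)
  by_cases hS0 : S = 0
  · -- degenerate case: both matrices vanish
    have hT0 : T = 0 := by rw [← hSeqT, hS0]
    have hB0 : B 0 = 0 := frobSq_eq_zero _ (by rw [fB0, hS0])
    have hB1 : B 1 = 0 := frobSq_eq_zero _ (by rw [fB1, hT0])
    have hH1z : H1 0 = 0 := by ext i j; fin_cases i <;> fin_cases j <;> simp [H1]
    have hH2z : H2 0 = 0 := by ext i j; fin_cases i <;> fin_cases j <;> simp [H2]
    have hH3z : H3 0 = 0 := by ext i j; fin_cases i <;> fin_cases j <;> simp [H3]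
    have hdez : (diagEmbed 0 : Matrix (Fin n) (Fin n) ℂ) = 0 := by
      ext i j
      by_cases h : i.val < 2 ∧ j.val < 2 <;> simp [diagEmbed, h]
    refine ⟨1, 1, 0, 0, by simp, by simp, le_refl 0, ?_, ?_⟩
    · rw [Fin.sum_univ_two, hB0, hB1, hH1z, hdez]
      simp
    · rw [Fin.sum_univ_two, hB0, hB1, hH2z, hH3z]
      simp [hdez]
  · have hSpos : 0 < S := lt_of_le_of_ne hSnn (Ne.symm hS0)
    have hTpos : 0 < T := hSeqT ▸ hSpos
    have hbex : ∃ p q, b p q ≠ 0 := by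
      by_contra hc
      push_neg at hc
      have hTz : T = 0 := by
        rw [hTdef]
        apply Finset.sum_eq_zero; intro p _
        apply Finset.sum_eq_zero; intro q _
        rw [hc p q, Complex.normSq_zero]
      linarith
    obtain ⟨p₀, q₀, hb0⟩ := hbex
    have hdiag : ∀ p, b p p = 0 := by
      intro p
      by_contra hbp
      have h := hkey p p hbp
      simp at h
      linarith
    have hk0 := hkey p₀ q₀ hb0
    have hne0 : p₀ ≠ q₀ := by
      rintro rfl; exact hb0 (hdiag p₀)
    have hsum0 : a p₀ ^ 2 + a q₀ ^ 2 ≤ S := haS p₀ q₀ hne0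
    obtain ⟨hy, hx2⟩ := aux_pair (a p₀) (a q₀) S hk0 hsum0
    have hxne : a p₀ ≠ 0 := by
      intro h; rw [h] at hx2; simp at hx2; linarith
    obtain ⟨p₁, q₁, hp1q1, hl1pos, hq1, hb1⟩ :
        ∃ p₁ q₁ : Fin n, p₁ ≠ q₁ ∧ 0 < a p₁ ∧ a q₁ = - a p₁ ∧ b p₁ q₁ ≠ 0 := by
      rcases lt_or_gt_of_ne hxne with hneg | hpos
      · refine ⟨q₀, p₀, hne0.symm, by linarith, by linarith, ?_⟩
        rw [hbsym p₀ q₀]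
        simpa using hb0
      · exact ⟨p₀, q₀, hne0, hpos, hy, hb0⟩
    set l := a p₁ with hldef
    have hk1 := hkey p₁ q₁ hb1
    rw [hq1, ← hldef] at hk1
    have hS2l : S = 2 * l ^ 2 := by linear_combination (-1/2 : ℝ) * hk1
    have hf3 : ∀ r, r ≠ p₁ → r ≠ q₁ → a r = 0 := by
      intro r hr1 hr2
      have hpair : ∑ r ∈ ({p₁, q₁} : Finset (Fin n)), a r ^ 2 = a p₁ ^ 2 + a q₁ ^ 2 :=
        Finset.sum_pair hp1q1
      have hval : a p₁ ^ 2 + a q₁ ^ 2 = S := by rw [hq1, hS2l]; ring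
      have hsd := Finset.sum_sdiff (f := fun r => a r ^ 2)
        (Finset.subset_univ ({p₁, q₁} : Finset (Fin n)))
      rw [hpair, hval] at hsd
      have hU : ∑ r, a r ^ 2 = S := hSdef.symm
      have hrest : ∑ r ∈ Finset.univ \ ({p₁, q₁} : Finset (Fin n)), a r ^ 2 = 0 := by
        linarith [hsd, hU]
      have hmem : r ∈ Finset.univ \ ({p₁, q₁} : Finset (Fin n)) := by
        simp [hr1, hr2]
      have h0 := (Finset.sum_eq_zero_iff_of_nonneg (fun i _ => sq_nonneg (a i))).mp hrest r hmem
      exact pow_eq_zero_iff two_ne_zero |>.mp h0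
    have hvals : ∀ r : Fin n, a r = l ∨ a r = -l ∨ a r = 0 := by
      intro r
      by_cases h1 : r = p₁
      · left; rw [h1]
      · by_cases h2 : r = q₁
        · right; left; rw [h2, hq1]
        · right; right; exact hf3 r h1 h2
    have hf4 : ∀ p q, b p q ≠ 0 → (p = p₁ ∧ q = q₁) ∨ (p = q₁ ∧ q = p₁) := by
      intro p q hbpq
      have hk := hkey p q hbpq
      rw [hS2l] at hk
      have hpq : p ≠ q := fun h => hbpq (h ▸ hdiag p)
      have hp : p = p₁ ∨ p = q₁ := by
        by_contra hc
        push_neg at hc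
        have hap : a p = 0 := hf3 p hc.1 hc.2
        refine aux_small l (a q) hl1pos ?_ (hvals q)
        rw [hap] at hk
        linear_combination hk
      have hq : q = p₁ ∨ q = q₁ := by
        by_contra hc
        push_neg at hc
        have haq : a q = 0 := hf3 q hc.1 hc.2
        refine aux_small l (a p) hl1pos ?_ (hvals p)
        rw [haq] at hk
        linear_combination hk
      rcases hp with hp | hp <;> rcases hq with hq | hq
      · exact absurd (hp.trans hq.symm) hpq
      · exact Or.inl ⟨hp, hq⟩
      · exact Or.inr ⟨hp, hq⟩
      · exact absurd (hp.trans hq.symm) hpq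
    set z := b p₁ q₁ with hzdef
    have hT2 : T = 2 * Complex.normSq z := by
      have hzero : ∀ p ∈ Finset.univ, p ∉ ({p₁, q₁} : Finset (Fin n)) →
          (∑ q, Complex.normSq (b p q)) = 0 := by
        intro p _ hp
        simp only [Finset.mem_insert, Finset.mem_singleton] at hp
        push_neg at hp
        apply Finset.sum_eq_zero; intro q _
        have hbz : b p q = 0 := by
          by_contra hb
          rcases hf4 p q hb with ⟨h1, _⟩ | ⟨h1, _⟩
          exacts [hp.1 h1, hp.2 h1]
        rw [hbz, Complex.normSq_zero]
      have houter2 : T = ∑ p ∈ ({p₁, q₁} : Finset (Fin n)), ∑ q, Complex.normSq (b p q) := by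
        rw [hTdef]
        exact (Finset.sum_subset (Finset.subset_univ _) hzero).symm
      have hinner1 : ∑ q, Complex.normSq (b p₁ q) = Complex.normSq z := by
        apply Finset.sum_eq_single_of_mem q₁ (Finset.mem_univ q₁)
        intro q _ hq
        have hbz : b p₁ q = 0 := by
          by_contra hb
          rcases hf4 p₁ q hb with ⟨_, h2⟩ | ⟨h1, _⟩
          exacts [hq h2, hp1q1 h1]
        rw [hbz, Complex.normSq_zero]
      have hinner2 : ∑ q, Complex.normSq (b q₁ q) = Complex.normSq z := by
        rw [show Complex.normSq z = Complex.normSq (b q₁ p₁) from by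
          rw [hbsym p₁ q₁, Complex.normSq_conj]]
        apply Finset.sum_eq_single_of_mem p₁ (Finset.mem_univ p₁)
        intro q _ hq
        have hbz : b q₁ q = 0 := by
          by_contra hb
          rcases hf4 q₁ q hb with ⟨h1, _⟩ | ⟨_, h2⟩
          exacts [hp1q1 h1.symm, hq h2]
        rw [hbz, Complex.normSq_zero]
      rw [houter2, Finset.sum_pair hp1q1, hinner1, hinner2]
      ring
    have hnz : Complex.normSq z = l ^ 2 := by
      have hTS : T = S := hSeqT.symm
      rw [hT2, hS2l] at hTS
      linarith
    have habs : ‖z‖ = l :=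
      aux_abs _ _ (norm_nonneg z) hl1pos (by rw [Complex.sq_norm, hnz])
    have hzval : z = (l : ℂ) * ((Real.cos (Complex.arg z) : ℂ)
        + (Real.sin (Complex.arg z) : ℂ) * Complex.I) := by
      conv_lhs => rw [← Complex.norm_mul_cos_add_sin_mul_I z]
      rw [habs, Complex.ofReal_cos, Complex.ofReal_sin]
    have hconjz : (starRingEnd ℂ) z = (l : ℂ) * ((Real.cos (Complex.arg z) : ℂ)
        - (Real.sin (Complex.arg z) : ℂ) * Complex.I) := by
      conv_lhs => rw [hzval]
      simp only [_root_.map_mul, _root_.map_add, Complex.conj_ofReal, Complex.conj_I]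
      ring
    -- build the permutation
    have h0n : 0 < n := by omega
    have h1n : 1 < n := by omega
    set i0 : Fin n := ⟨0, h0n⟩ with hi0def
    set i1 : Fin n := ⟨1, h1n⟩ with hi1def
    have h01 : i0 ≠ i1 := by simp [hi0def, hi1def, Fin.ext_iff]
    set τ1 : Equiv.Perm (Fin n) := Equiv.swap i0 p₁ with hτ1def
    set w : Fin n := τ1 q₁ with hwdef
    have hw0 : w ≠ i0 := by
      intro h
      have h2 : τ1 p₁ = i0 := Equiv.swap_apply_right i0 p₁
      have h3 : τ1 q₁ = i0 := hwdef.symm.trans h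
      exact hp1q1 (τ1.injective (h2.trans h3.symm))
    set τ2 : Equiv.Perm (Fin n) := Equiv.swap i1 w with hτ2def
    set σ : Equiv.Perm (Fin n) := τ2.trans τ1 with hσdef
    have hσ0 : σ i0 = p₁ := by
      show τ1 (τ2 i0) = p₁
      rw [hτ2def, Equiv.swap_apply_of_ne_of_ne h01 (Ne.symm hw0), hτ1def,
        Equiv.swap_apply_left]
    have hσ1 : σ i1 = q₁ := by
      show τ1 (τ2 i1) = q₁
      rw [hτ2def, Equiv.swap_apply_left, hwdef, hτ1def, Equiv.swap_apply_self]
    set P : Matrix (Fin n) (Fin n) ℂ := Matrix.of (fun i j => U i (σ j)) with hPdef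
    have hentry : ∀ (A : Matrix (Fin n) (Fin n) ℂ) (i j : Fin n),
        (Pᴴ * A * P) i j = (Uᴴ * A * U) (σ i) (σ j) := by
      intro A i j
      simp only [hPdef, Matrix.mul_apply, Matrix.conjTranspose_apply, Matrix.of_apply]
    have hPunit : Pᴴ * P = 1 := by
      ext i j
      have he : (Pᴴ * P) i j = (Uᴴ * U) (σ i) (σ j) := by
        simp only [hPdef, Matrix.mul_apply, Matrix.conjTranspose_apply, Matrix.of_apply]
      rw [he, hUU, Matrix.one_apply, Matrix.one_apply]
      simp [Equiv.apply_eq_iff_eq]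
    -- index helpers
    have hival : ∀ (i : Fin n) (h2 : i.val < 2), i = i0 ∨ i = i1 := by
      intro i h2
      rcases fin2_cases ⟨i.val, h2⟩ with h | h
      · left; apply Fin.ext; simpa [Fin.ext_iff, hi0def] using congrArg Fin.val h
      · right; apply Fin.ext; simpa [Fin.ext_iff, hi1def] using congrArg Fin.val h
    have hnoti0 : ∀ (i : Fin n), ¬ i.val < 2 → i ≠ i0 ∧ i ≠ i1 := by
      intro i h2
      constructor <;> intro h <;> rw [h] at h2 <;> simp [hi0def, hi1def] at h2
    have hσnot : ∀ (i : Fin n), ¬ i.val < 2 → σ i ≠ p₁ ∧ σ i ≠ q₁ := by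
      intro i h2
      obtain ⟨hne1, hne2⟩ := hnoti0 i h2
      constructor
      · intro h; exact hne1 (σ.injective (h.trans hσ0.symm))
      · intro h; exact hne2 (σ.injective (h.trans hσ1.symm))
    -- goal 1
    have goal1 : Pᴴ * B 0 * P = diagEmbed (H1 l) := by
      ext i j
      rw [hentry, hUD]
      by_cases hij : i = j
      · subst hij
        rw [Matrix.diagonal_apply_eq]
        by_cases h2 : i.val < 2
        · rw [diagEmbed_apply_lt _ _ _ h2 h2]
          rcases hival i h2 with rfl | rfl
          · rw [hσ0]
            have : (⟨i0.val, h2⟩ : Fin 2) = 0 := by simp [hi0def]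
            rw [this]
            simp [H1, hldef]
          · rw [hσ1, hq1]
            have : (⟨i1.val, h2⟩ : Fin 2) = 1 := by simp [hi1def]
            rw [this]
            simp [H1, hldef]
        · rw [show diagEmbed (H1 l) i i = 0 from by simp [diagEmbed, h2]]
          obtain ⟨hne1, hne2⟩ := hσnot i h2
          rw [hf3 _ hne1 hne2]
          simp
      · rw [Matrix.diagonal_apply_ne _ (fun h => hij (σ.injective h))]
        by_cases h2 : i.val < 2 ∧ j.val < 2
        · rw [diagEmbed_apply_lt _ _ _ h2.1 h2.2]
          have hne2 : (⟨i.val, h2.1⟩ : Fin 2) ≠ ⟨j.val, h2.2⟩ := by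
            intro h; exact hij (Fin.ext (by simpa [Fin.ext_iff] using congrArg Fin.val h))
          rcases fin2_cases ⟨i.val, h2.1⟩ with h | h <;>
            rcases fin2_cases ⟨j.val, h2.2⟩ with h' | h'
          · exact absurd (h.trans h'.symm) hne2
          · rw [h, h']; simp [H1]
          · rw [h, h']; simp [H1]
          · exact absurd (h.trans h'.symm) hne2
        · rw [show diagEmbed (H1 l) i j = 0 from by simp only [diagEmbed, dif_neg h2]]
    -- goal 2
    have goal2 : Pᴴ * B 1 * P = diagEmbed (MT l (Complex.arg z)) := by
      ext i j
      rw [hentry]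
      have hbe : (Uᴴ * B 1 * U) (σ i) (σ j) = b (σ i) (σ j) := rfl
      rw [hbe]
      by_cases h1 : i = i0 ∧ j = i1
      · rw [h1.1, h1.2, hσ0, hσ1]
        rw [diagEmbed_apply_lt _ _ _ (by simp [hi0def]) (by simp [hi1def])]
        have hI : (⟨i0.val, by simp [hi0def]⟩ : Fin 2) = 0 := by simp [hi0def]
        have hJ : (⟨i1.val, by simp [hi1def]⟩ : Fin 2) = 1 := by simp [hi1def]
        rw [hI, hJ, MT01]
        exact hzval
      · by_cases hcase2 : i = i1 ∧ j = i0
        · rw [hcase2.1, hcase2.2, hσ1, hσ0]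
          rw [show b q₁ p₁ = (starRingEnd ℂ) z from hbsym p₁ q₁]
          rw [diagEmbed_apply_lt _ _ _ (by simp [hi1def]) (by simp [hi0def])]
          have hI : (⟨i1.val, by simp [hi1def]⟩ : Fin 2) = 1 := by simp [hi1def]
          have hJ : (⟨i0.val, by simp [hi0def]⟩ : Fin 2) = 0 := by simp [hi0def]
          rw [hI, hJ, MT10]
          exact hconjz
        · have hbz : b (σ i) (σ j) = 0 := by
            by_contra hb
            rcases hf4 _ _ hb with ⟨ha, hb'⟩ | ⟨ha, hb'⟩
            · exact h1 ⟨σ.injective (ha.trans hσ0.symm), σ.injective (hb'.trans hσ1.symm)⟩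
            · exact hcase2 ⟨σ.injective (ha.trans hσ1.symm), σ.injective (hb'.trans hσ0.symm)⟩
          rw [hbz]
          by_cases h2 : i.val < 2 ∧ j.val < 2
          · rw [diagEmbed_apply_lt _ _ _ h2.1 h2.2]
            rcases hival i h2.1 with rfl | rfl <;> rcases hival j h2.2 with rfl | rfl
            · have hI : (⟨i0.val, h2.1⟩ : Fin 2) = 0 := by simp [hi0def]
              rw [hI, MT00]
            · exact absurd ⟨rfl, rfl⟩ h1
            · exact absurd ⟨rfl, rfl⟩ hcase2
            · have hI : (⟨i1.val, h2.1⟩ : Fin 2) = 1 := by simp [hi1def]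
              rw [hI, MT11]
          · rw [show diagEmbed (MT l (Complex.arg z)) i j = 0 from by
              simp only [diagEmbed, dif_neg h2]]
    have goal2' : Pᴴ * B 1 * P = diagEmbed ((Real.cos (-(Complex.arg z)) : ℂ) • H2 l
        + (Real.sin (-(Complex.arg z)) : ℂ) • H3 l) := goal2
    refine ⟨P, 1, l, -(Complex.arg z), hPunit, by simp, le_of_lt hl1pos, ?_, ?_⟩
    · rw [Fin.sum_univ_two]
      simp only [Matrix.one_apply_eq, Matrix.one_apply_ne (by decide : (1 : Fin 2) ≠ 0),
        Complex.ofReal_one, Complex.ofReal_zero, one_smul, zero_smul, add_zero]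
      exact goal1
    · rw [Fin.sum_univ_two]
      simp only [Matrix.one_apply_eq, Matrix.one_apply_ne (by decide : (0 : Fin 2) ≠ 1),
        Complex.ofReal_one, Complex.ofReal_zero, one_smul, zero_smul, zero_add]
      exact goal2'

theorem ddvv_hermitian_two_equality (n : ℕ) (hn : 2 ≤ n)
    (B : Fin 2 → Matrix (Fin n) (Fin n) ℂ) (hB : ∀ r, (B r)ᴴ = B r) :
    (2 * frobSq (mcomm (B 0) (B 1)) = (frobSq (B 0) + frobSq (B 1)) ^ 2) ↔
      ∃ (P : Matrix (Fin n) (Fin n) ℂ) (R : Matrix (Fin 2) (Fin 2) ℝ) (l θ : ℝ),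
        Pᴴ * P = 1 ∧ Rᵀ * R = 1 ∧ 0 ≤ l ∧
        (∑ j : Fin 2, (R j 0 : ℂ) • (Pᴴ * B j * P)) = diagEmbed (H1 l) ∧
        (∑ j : Fin 2, (R j 1 : ℂ) • (Pᴴ * B j * P)) =
          diagEmbed ((Real.cos θ : ℂ) • H2 l + (Real.sin θ : ℂ) • H3 l) := by
  constructor
  · exact forward_aux hn B hB
  · rintro ⟨P, R, l, θ, hP, hR, hl, h1, h2⟩
    exact reverse_aux hn B P R l θ hP hR h1 h2
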